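/- arXiv:2212.08295 — 2 statements merged into one kernel-verified Lean document; each statement's English description precedes it below -/
import Mathlib

section
/- Fix a nonzero f ∈ C_c(W), and let A be the subalgebra of C_c(W) generated by the template system T(f) = { g ∈ C_c(W) : g(x) = f(ax + b) for some a ∈ ℝ, b ∈ ℝ² }. Then A is dense in C_c(W) with respect to the strict inductive limit topology. -/
/-! Setup: the birth-death plane, the space `C_c(W)` of compactly supported continuous
functions, the strict inductive limit (LF) topology on it, and Radon measures on `W`. -/

noncomputable section

open MeasureTheory Topology Filter Set Function
open scoped ENNReal

/-- The ambient plane `ℝ²`. -/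
abbrev P2 : Type := ℝ × ℝ

/-- The birth-death plane `W = {(b,d) : b < d}`. -/
def Wbd : Set P2 := {p | p.1 < p.2}

/-- `C_c(W)` as a submodule of `P2 → ℝ`: continuous, compactly supported functions with
(closed) support contained in the open set `W`, extended by zero to the plane. -/
def CcW : Submodule ℝ (P2 → ℝ) where
  carrier := {f | Continuous f ∧ HasCompactSupport f ∧ tsupport f ⊆ Wbd}
  zero_mem' := by
    refine ⟨continuous_zero, ?_, ?_⟩ <;>
      simp [HasCompactSupport, tsupport_eq_empty_iff.mpr rfl]
  add_mem' := by
    rintro f g ⟨hfc, hfs, hfW⟩ ⟨hgc, hgs, hgW⟩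
    exact ⟨hfc.add hgc, hfs.add hgs, (tsupport_add f g).trans (union_subset hfW hgW)⟩
  smul_mem' := by
    rintro c f ⟨hfc, hfs, hfW⟩
    refine ⟨hfc.const_smul c, ?_, ?_⟩
    · exact hfs.mono (support_const_smul_subset c f)
    · exact (closure_mono (support_const_smul_subset c f)).trans hfW

/-- The topology of uniform (sup-norm) convergence on the subspace
`C_c(K) = {f ∈ C_c(W) : supp f ⊆ K}`. -/
def supNormTop (K : Set P2) : TopologicalSpace {g : ↥CcW // tsupport (g : P2 → ℝ) ⊆ K} :=
  TopologicalSpace.induced (fun g => UniformFun.ofFun (g.1 : P2 → ℝ)) inferInstance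

/-- `t` is a locally convex (vector space) topology on `C_c(W)`. -/
def IsLocallyConvexTop (t : TopologicalSpace ↥CcW) : Prop :=
  @IsTopologicalAddGroup ↥CcW t _ ∧ @ContinuousSMul ℝ ↥CcW _ _ t ∧
    @LocallyConvexSpace ℝ ↥CcW _ _ _ _ t

/-- The strict inductive limit topology on `C_c(W)`: the finest locally convex topology
making every inclusion `C_c(K) ↪ C_c(W)`, `K ⊆ W` compact, continuous (recall that in
the lattice of topologies on a type, `≤` means finer, so the finest such topology is the
infimum). -/
def lfTopology : TopologicalSpace ↥CcW :=
  sInf {t | IsLocallyConvexTop t ∧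
    ∀ K : Set P2, IsCompact K → K ⊆ Wbd →
      @Continuous _ _ (supNormTop K) t (Subtype.val : {g : ↥CcW // tsupport (g : P2 → ℝ) ⊆ K} → ↥CcW)}

/-- The template system `T(f)`: all members of `C_c(W)` of the form `x ↦ f(a x + b)`,
`a ∈ ℝ`, `b ∈ ℝ²`. -/
def TemplateSys (f : P2 → ℝ) : Set (P2 → ℝ) :=
  {g | g ∈ CcW ∧ ∃ (a : ℝ) (b : P2), g = fun x => f (a • x + b)}

/-!
Extension by zero identifies `C_c(U)`, for `U ⊆ W` open, with the continuous functions on the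
one-point compactification `OnePoint U` that vanish at `∞`. A rescaled translate
`x ↦ f (a x + b)` with `a` large is nonzero at any prescribed point and supported in any
prescribed neighbourhood of it, so the template algebra separates the points of `OnePoint U`,
and Stone–Weierstrass (for its unitization) approximates every `g ∈ C_c(U)` uniformly by
elements of the template algebra supported in `U`. Taking for `U` the interior of a compact
`K ⊆ W` around `supp g`, the approximants converge to `g` in `C_c(K)`, hence in the strict
inductive limit topology.
-/

/-- Stone–Weierstrass applied to the unitization `ℝ ⊕ S`; evaluating at `x₀` shows that the
scalar part of the approximant is small. -/
theorem ContinuousMap.exists_mem_nonUnitalSubalgebra_near_of_separatesPoints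
    {X : Type*} [TopologicalSpace X] [CompactSpace X] [T2Space X] {x₀ : X}
    (S : NonUnitalSubalgebra ℝ C(X, ℝ)) (hS₀ : ∀ s ∈ S, s x₀ = 0)
    (hS : ∀ ⦃x y : X⦄, x ≠ y → ∃ s ∈ S, s x ≠ s y)
    (g : C(X, ℝ)) (hg : g x₀ = 0) {ε : ℝ} (hε : 0 < ε) :
    ∃ s ∈ S, dist g s < ε := by
  have : Nonempty X := ⟨x₀⟩
  set B := (NonUnitalSubalgebra.unitization S).range
  have hB : B.SeparatesPoints := fun x y hxy ↦ by
    obtain ⟨s, hs, hne⟩ := hS hxy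
    exact ⟨s, ⟨s, ⟨Unitization.inr ⟨s, hs⟩, by simp⟩, rfl⟩, hne⟩
  obtain ⟨⟨_, ⟨c, s⟩, rfl⟩, hh⟩ :=
    exists_mem_subalgebra_near_continuousMap_of_separatesPoints B hB g (ε / 2) (by positivity)
  set h := algebraMap ℝ C(X, ℝ) c + s
  replace hh : ‖h - g‖ < ε / 2 := hh
  have hc : ‖c‖ < ε / 2 :=
    calc ‖c‖ = ‖(h - g) x₀‖ := by simp [h, hS₀ s s.2, hg]
      _ ≤ ‖h - g‖ := (h - g).norm_coe_le_norm x₀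
      _ < ε / 2 := hh
  refine ⟨s, s.2, ?_⟩
  calc dist g s = ‖algebraMap ℝ C(X, ℝ) c - (h - g)‖ := by
        rw [dist_eq_norm]; congr 1; simp only [h]; abel
    _ ≤ ‖c‖ + ‖h - g‖ := by grw [norm_sub_le, norm_algebraMap']
    _ < ε := by linarith

theorem HasCompactSupport.comp_subtypeVal_of_tsupport_subset {X M : Type*}
    [TopologicalSpace X] [Zero M] {p : X → M} {U : Set X} (hp : HasCompactSupport p)
    (hpU : tsupport p ⊆ U) :
    HasCompactSupport (p ∘ ((↑) : U → X)) :=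
  .intro' (IsInducing.subtypeVal.isCompact_preimage' hp (by simpa using hpU))
    ((isClosed_tsupport p).preimage continuous_subtype_val)
    fun _ hx ↦ image_eq_zero_of_notMem_tsupport (f := p) hx

section ExtendByZero

variable {X : Type*}

def extendByZero (U : Set X) : (X → ℝ) →ₙₐ[ℝ] (OnePoint U → ℝ) where
  toFun p y := y.elim 0 (p ∘ (↑))
  map_add' p q := by ext y; induction y using OnePoint.rec <;> simp
  map_zero' := by ext y; induction y using OnePoint.rec <;> simp
  map_mul' p q := by ext y; induction y using OnePoint.rec <;> simp
  map_smul' c p := by ext y; induction y using OnePoint.rec <;> simp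

@[simp] lemma extendByZero_infty (U : Set X) (p : X → ℝ) :
    extendByZero U p OnePoint.infty = 0 := rfl

@[simp] lemma extendByZero_coe (U : Set X) (p : X → ℝ) (u : U) : extendByZero U p u = p u := rfl

variable [TopologicalSpace X]

/-- `C_c(U)`, extended by zero to the whole space. -/
def ccOn (U : Set X) : NonUnitalSubalgebra ℝ (X → ℝ) where
  carrier := {p | Continuous p ∧ HasCompactSupport p ∧ tsupport p ⊆ U}
  zero_mem' := ⟨continuous_zero, .zero, by simp⟩
  add_mem' := fun ⟨hpc, hps, hpU⟩ ⟨hqc, hqs, hqU⟩ ↦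
    ⟨hpc.add hqc, hps.add hqs, (tsupport_add _ _).trans (Set.union_subset hpU hqU)⟩
  smul_mem' := fun c p ⟨hpc, hps, hpU⟩ ↦
    ⟨hpc.const_smul c, hps.mono (support_const_smul_subset c p),
      (tsupport_smul_subset_right (fun _ ↦ c) p).trans hpU⟩
  mul_mem' := fun ⟨hpc, hps, hpU⟩ ⟨hqc, _, _⟩ ↦
    ⟨hpc.mul hqc, hps.mul_right, tsupport_mul_subset_left.trans hpU⟩

lemma continuous_extendByZero {U : Set X} {p : X → ℝ} (hp : p ∈ ccOn U) :
    Continuous (extendByZero U p) :=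
  (OnePoint.continuous_iff _).2
    ⟨tendsto_const_nhds.congr' (hasCompactSupport_iff_eventuallyEq.1
      (hp.2.1.comp_subtypeVal_of_tsupport_subset hp.2.2)).symm, hp.1.comp continuous_subtype_val⟩

end ExtendByZero

section OnePointExtension

variable {X : Type*} [TopologicalSpace X] {A : NonUnitalSubalgebra ℝ (X → ℝ)} {U : Set X}

variable (A U) in
/-- The members of `A` compactly supported in `U`, viewed in `C(OnePoint U, ℝ)`. -/
def onePointExtension : NonUnitalSubalgebra ℝ C(OnePoint U, ℝ) :=
  ((A ⊓ ccOn U).map (extendByZero U)).comap (ContinuousMap.coeFnAlgHom ℝ)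

lemma mk_mem_onePointExtension {p : X → ℝ} (hpA : p ∈ A) (hpU : p ∈ ccOn U) :
    ⟨extendByZero U p, continuous_extendByZero hpU⟩ ∈ onePointExtension A U :=
  ⟨p, ⟨hpA, hpU⟩, rfl⟩

lemma apply_infty_of_mem_onePointExtension {s : C(OnePoint U, ℝ)}
    (hs : s ∈ onePointExtension A U) : s OnePoint.infty = 0 := by
  obtain ⟨p, -, hp⟩ := NonUnitalSubalgebra.mem_map.1 hs
  exact congrFun hp.symm OnePoint.infty

lemma separatesPoints_onePointExtension [T1Space X]
    (hA : ∀ u ∈ U, ∀ V ∈ 𝓝 u, ∃ p ∈ A, p ∈ ccOn U ∧ p u ≠ 0 ∧ tsupport p ⊆ V)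
    ⦃x y : OnePoint U⦄ (hxy : x ≠ y) : ∃ s ∈ onePointExtension A U, s x ≠ s y := by
  have separate_coe : ∀ (u : U) (y : OnePoint U), y ≠ u →
      ∃ s ∈ onePointExtension A U, s u ≠ s y := by
    intro u y hy
    induction y using OnePoint.rec with
    | infty =>
      obtain ⟨p, hpA, hpU, hpu, -⟩ := hA u u.2 univ univ_mem
      exact ⟨_, mk_mem_onePointExtension hpA hpU, by simpa using hpu⟩
    | coe v =>
      have hvu : (v : X) ≠ u := fun h ↦ hy (congrArg _ (Subtype.ext h))
      obtain ⟨p, hpA, hpU, hpu, hpv⟩ := hA u u.2 {(v : X)}ᶜ (compl_singleton_mem_nhds hvu.symm)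
      refine ⟨_, mk_mem_onePointExtension hpA hpU, ?_⟩
      simpa [image_eq_zero_of_notMem_tsupport fun h ↦ hpv h rfl] using hpu
  induction x using OnePoint.rec with
  | infty =>
    induction y using OnePoint.rec with
    | infty => exact (hxy rfl).elim
    | coe v =>
      obtain ⟨s, hs, hne⟩ := separate_coe v OnePoint.infty hxy
      exact ⟨s, hs, hne.symm⟩
  | coe u => exact separate_coe u y hxy.symm

theorem exists_mem_ccOn_near_of_forall_nhds [T2Space X] [LocallyCompactSpace U]
    (hA : ∀ u ∈ U, ∀ V ∈ 𝓝 u, ∃ p ∈ A, p ∈ ccOn U ∧ p u ≠ 0 ∧ tsupport p ⊆ V)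
    {g : X → ℝ} (hg : g ∈ ccOn U) {ε : ℝ} (hε : 0 < ε) :
    ∃ p ∈ A, p ∈ ccOn U ∧ ∀ x, dist (g x) (p x) < ε := by
  set g' : C(OnePoint U, ℝ) := ⟨extendByZero U g, continuous_extendByZero hg⟩
  obtain ⟨s, hs, hgs⟩ := ContinuousMap.exists_mem_nonUnitalSubalgebra_near_of_separatesPoints
    (onePointExtension A U) (fun _ ↦ apply_infty_of_mem_onePointExtension)
    (separatesPoints_onePointExtension hA) g' rfl hε
  obtain ⟨p, ⟨hpA, hpU⟩, hps⟩ := NonUnitalSubalgebra.mem_map.1 hs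
  refine ⟨p, hpA, hpU, fun x ↦ ?_⟩
  by_cases hx : x ∈ U
  · calc dist (g x) (p x)
        _ = dist (g' (⟨x, hx⟩ : U)) (s (⟨x, hx⟩ : U)) := by
          rw [show p x = s (⟨x, hx⟩ : U) from congrFun hps (⟨x, hx⟩ : U)]; rfl
        _ ≤ dist g' s := ContinuousMap.dist_apply_le_dist _
        _ < ε := hgs
  · rwa [image_eq_zero_of_notMem_tsupport fun h ↦ hx (hg.2.2 h),
      image_eq_zero_of_notMem_tsupport fun h ↦ hx (hpU.2.2 h), dist_self]

end OnePointExtension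

lemma isOpen_Wbd : IsOpen Wbd := isOpen_lt continuous_fst continuous_snd

theorem exists_smul_add_ne_zero_tsupport_subset_closedBall {E M : Type*}
    [NormedAddCommGroup E] [NormedSpace ℝ E] [Zero M] {f : E → M}
    (hf : Bornology.IsBounded (support f)) (hf0 : f ≠ 0) (x₀ : E) {r : ℝ} (hr : 0 < r) :
    ∃ (a : ℝ) (b : E), f (a • x₀ + b) ≠ 0 ∧
      tsupport (fun x ↦ f (a • x + b)) ⊆ Metric.closedBall x₀ r := by
  obtain ⟨q, hq⟩ := Function.ne_iff.1 hf0
  obtain ⟨R, hR⟩ := (Metric.isBounded_iff_subset_closedBall q).1 hf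
  have hR₀ : 0 ≤ R := by simpa using hR hq
  -- scaling by `a` shrinks the ball of radius `R` around `q` into the ball of radius `r`
  set a := (R + 1) / r
  have ha : 0 < a := by positivity
  refine ⟨a, q - a • x₀, by simpa using hq,
    closure_minimal (fun x hx ↦ ?_) Metric.isClosed_closedBall⟩
  have hx : a * ‖x - x₀‖ ≤ R := by
    have := hR hx
    rwa [Metric.mem_closedBall, dist_eq_norm, show a • x + (q - a • x₀) - q = a • (x - x₀) by
      rw [smul_sub]; abel, norm_smul, Real.norm_of_nonneg ha.le] at this
  rw [Metric.mem_closedBall, dist_eq_norm]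
  calc ‖x - x₀‖ ≤ R / a := by rw [le_div_iff₀ ha]; linarith
    _ ≤ r := by rw [div_le_iff₀ ha, show r * a = R + 1 by simp only [a]; field_simp]; linarith

lemma exists_mem_templateSys_ne_zero_tsupport_subset {f : P2 → ℝ} (hf : f ∈ CcW) (hf0 : f ≠ 0)
    {x₀ : P2} {V : Set P2} (hV : V ∈ 𝓝 x₀) (hVW : V ⊆ Wbd) :
    ∃ t ∈ TemplateSys f, t x₀ ≠ 0 ∧ tsupport t ⊆ V := by
  obtain ⟨r, hr, hrV⟩ := Metric.nhds_basis_closedBall.mem_iff.1 hV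
  obtain ⟨a, b, hne, hsupp⟩ := exists_smul_add_ne_zero_tsupport_subset_closedBall
    (hf.2.1.isBounded.subset (subset_tsupport f)) hf0 x₀ hr
  refine ⟨_, ⟨⟨hf.1.comp (by fun_prop), ?_, (hsupp.trans hrV).trans hVW⟩, a, b, rfl⟩, hne,
    hsupp.trans hrV⟩
  exact (isCompact_closedBall x₀ r).of_isClosed_subset (isClosed_tsupport _) hsupp

lemma exists_mem_adjoin_templateSys_near {f : P2 → ℝ} (hf : f ∈ CcW) (hf0 : f ≠ 0)
    {U : Set P2} (hU : IsOpen U) (hUW : U ⊆ Wbd) {g : P2 → ℝ} (hg : g ∈ ccOn U) {ε : ℝ}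
    (hε : 0 < ε) :
    ∃ p ∈ NonUnitalAlgebra.adjoin ℝ (TemplateSys f), tsupport p ⊆ U ∧
      ∀ x, dist (g x) (p x) < ε := by
  have := hU.locallyCompactSpace
  refine (exists_mem_ccOn_near_of_forall_nhds (fun u hu V hV ↦ ?_) hg hε).imp
    fun p ⟨hpA, hpU, hp⟩ ↦ ⟨hpA, hpU.2.2, hp⟩
  obtain ⟨t, ht, htu, htV⟩ := exists_mem_templateSys_ne_zero_tsupport_subset hf hf0
    (inter_mem hV (hU.mem_nhds hu)) (inter_subset_right.trans hUW)
  exact ⟨t, NonUnitalAlgebra.subset_adjoin ℝ ht,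
    ⟨ht.1.1, ht.1.2.1, htV.trans inter_subset_right⟩, htu, htV.trans inter_subset_left⟩

lemma adjoin_templateSys_le_ccOn (f : P2 → ℝ) :
    NonUnitalAlgebra.adjoin ℝ (TemplateSys f) ≤ ccOn Wbd :=
  NonUnitalAlgebra.adjoin_le fun _ ht ↦ ht.1

lemma mem_closure_lfTopology_of_forall_near {s : Set ↥CcW} {g : ↥CcW} {K : Set P2}
    (hK : IsCompact K) (hKW : K ⊆ Wbd) (hgK : tsupport (g : P2 → ℝ) ⊆ K)
    (h : ∀ ε > 0, ∃ p ∈ s, tsupport (p : P2 → ℝ) ⊆ K ∧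
      ∀ x, dist ((g : P2 → ℝ) x) ((p : P2 → ℝ) x) < ε) :
    g ∈ closure[lfTopology] s := by
  have hι : Continuous[supNormTop K, lfTopology] Subtype.val :=
    continuous_sInf_rng.2 fun _ ht ↦ ht.2 K hK hKW
  have hbasis : (@nhds _ (supNormTop K) ⟨g, hgK⟩).HasBasis (0 < ·)
      fun ε ↦ {p | ∀ x, dist ((g : P2 → ℝ) x) ((p.1 : P2 → ℝ) x) < ε} := by
    rw [supNormTop, nhds_induced]
    exact (UniformFun.hasBasis_nhds_of_basis P2 ℝ _ Metric.uniformity_basis_dist).comap _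
  have hg : ⟨g, hgK⟩ ∈ closure[supNormTop K] (Subtype.val ⁻¹' s) := by
    let _ := supNormTop K
    refine (mem_closure_iff_nhds_basis hbasis).2 fun ε hε ↦ ?_
    obtain ⟨p, hps, hpK, hp⟩ := h ε hε
    exact ⟨⟨p, hpK⟩, hps, hp⟩
  exact @map_mem_closure _ _ (supNormTop K) lfTopology _ _ _ _ hι hg (mapsTo_preimage _ _)

/-- For a fixed nonzero `f ∈ C_c(W)`, the (non-unital) subalgebra of
`C_c(W)` generated by the template system `T(f)` — all finite real-linear combinations
of finite products of rescaled translates of `f` — is dense in `C_c(W)` for the strict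
inductive limit topology. -/
theorem template_subalgebra_dense
    (f : P2 → ℝ) (hf : f ∈ CcW) (hf0 : f ≠ 0) :
    @Dense ↥CcW lfTopology
      {g : ↥CcW | (g : P2 → ℝ) ∈ NonUnitalAlgebra.adjoin ℝ (TemplateSys f)} := by
  intro g
  obtain ⟨K, hK, hgK, hKW⟩ := exists_compact_between g.2.2.1 isOpen_Wbd g.2.2.2
  refine mem_closure_lfTopology_of_forall_near hK hKW (hgK.trans interior_subset) fun ε hε ↦ ?_
  obtain ⟨p, hpA, hpK, hp⟩ := exists_mem_adjoin_templateSys_near hf hf0 isOpen_interior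
    (interior_subset.trans hKW) ⟨g.2.1, g.2.2.1, hgK⟩ hε
  exact ⟨⟨p, adjoin_templateSys_le_ccOn f hpA⟩, hpA, hpK.trans interior_subset, hp⟩
end
end

section
/- Let ε > 0 and let μ, ν ∈ M^∞. For any measurable set U ⊆ W_ε, if OT_∞(μ, ν) < ε/2 then μ(Ū) ≤ ν(U^{ε/2}) and ν(Ū) ≤ μ(U^{ε/2}), where Ū denotes the closure of U and U^{ε/2} = { x ∈ W : ‖x − U‖_q < ε/2 } is the (ε/2)-thickening of U. -/
/-! Common setup: the birth-death plane, Radon measures, partial optimal transport. -/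

noncomputable section

open MeasureTheory Topology Filter Set
open scoped ENNReal

/-- The closure `W̄` of the birth-death plane. -/
def Wcl : Set P2 := closure Wbd

/-- The diagonal `Δ`. -/
def Diag : Set P2 := {p | p.1 = p.2}

/-- Distance from a point to the diagonal, `‖x - Δ‖`. -/
def distDiag (x : P2) : ℝ := Metric.infDist x Diag

/-- The pseudometric `d(x,y) = min(‖x-y‖, ‖x-Δ‖ + ‖y-Δ‖)` on `W̄`. -/
def dW (x y : P2) : ℝ := min (dist x y) (distDiag x + distDiag y)

/-- The support of a Borel measure: points all of whose neighborhoods have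
positive measure. -/
def msupport {α : Type*} [TopologicalSpace α] [MeasurableSpace α] (μ : Measure α) : Set α :=
  {x | ∀ U ∈ 𝓝 x, 0 < μ U}

/-- `μ` is a Radon measure on the subspace `S`: it vanishes off `S`, is inner regular
(on relatively open sets) by compact sets, outer regular (by relatively open sets), and finite
on compact subsets of `S`. -/
def RadonOn {α : Type*} [TopologicalSpace α] [MeasurableSpace α] (S : Set α)
    (μ : Measure α) : Prop :=
  μ Sᶜ = 0 ∧
  (∀ U : Set α, IsOpen U → μ (U ∩ S) = ⨆ (K : Set α) (_ : K ⊆ U ∩ S) (_ : IsCompact K), μ K) ∧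
  (∀ E : Set α, E ⊆ S → MeasurableSet E →
    μ E = ⨅ (U : Set α) (_ : IsOpen U) (_ : E ⊆ U), μ (U ∩ S)) ∧
  (∀ K : Set α, K ⊆ S → IsCompact K → μ K < ⊤)

/-- The set `M` of Radon measures on `W`. -/
def MRadon : Set (Measure P2) := {μ | RadonOn Wbd μ}

/-- `pers_∞(μ) = sup{‖x-Δ‖ : x ∈ spt μ}` (valued in `ℝ≥0∞`). -/
def persInf (μ : Measure P2) : ℝ≥0∞ := ⨆ x ∈ msupport μ, ENNReal.ofReal (distDiag x)

/-- The space `M^∞` of Radon measures on `W` with finite `∞`-persistence. -/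
def MInf : Set (Measure P2) := {μ | RadonOn Wbd μ ∧ persInf μ < ⊤}

/-- A coupling (admissible transport plan) between `μ` and `ν`: a Radon measure on
`W̄ × W̄` whose marginals restricted to Borel subsets of `W` are `μ` and `ν`. -/
def IsCoupling (π : Measure (P2 × P2)) (μ ν : Measure P2) : Prop :=
  RadonOn (Wcl ×ˢ Wcl) π ∧
  (∀ A : Set P2, A ⊆ Wbd → MeasurableSet A → π (A ×ˢ Wcl) = μ A) ∧
  (∀ B : Set P2, B ⊆ Wbd → MeasurableSet B → π (Wcl ×ˢ B) = ν B)

/-- The `∞`-cost of a transport plan: `sup {d(x,y) : (x,y) ∈ spt π}`. -/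
def costInf (π : Measure (P2 × P2)) : ℝ≥0∞ :=
  ⨆ p ∈ msupport π, ENNReal.ofReal (dW p.1 p.2)

/-- The partial `∞`-optimal transport distance. -/
def OT (μ ν : Measure P2) : ℝ≥0∞ :=
  ⨅ (π : Measure (P2 × P2)) (_ : IsCoupling π μ ν), costInf π

/-- `W_ε = {(x,y) : y - x > ε}`. -/
def Weps (ε : ℝ) : Set P2 := {p | p.2 - p.1 > ε}

/-- The space `M_f^∞` of off-diagonally finite measures. -/
def Mf : Set (Measure P2) := {μ | μ ∈ MInf ∧ ∀ ε : ℝ, 0 < ε → μ (Weps ε) < ⊤}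

/-- The space `M_fin^∞` of finite measures in `M^∞`. -/
def Mfin : Set (Measure P2) := {μ | μ ∈ MInf ∧ μ Wbd < ⊤}

/-- `f ∈ C_c(W)`: a continuous function, compactly supported, with support contained
in the open set `W` (extended by zero to the plane). -/
def IsCcW (f : P2 → ℝ) : Prop :=
  Continuous f ∧ HasCompactSupport f ∧ tsupport f ⊆ Wbd

/-- Convergence of a sequence of measures to `μ` in the distance `OT_∞`. -/
def OTConv (u : ℕ → Measure P2) (μ : Measure P2) : Prop :=
  Tendsto (fun n => OT (u n) μ) atTop (𝓝 0)


/-! Take a coupling `π` of cost `< ε/2`. Since `ℝ² × ℝ²` is second countable, the support of `π`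
is conull, so `π`-almost every pair `(a, b)` has `d(a, b) < ε/2`. A point `a ∈ Ū` lies at distance
`≥ ε/2` from the diagonal, so the diagonal branch of `d` is not available and `‖a - b‖ < ε/2`;
hence `b` lies in `U^{ε/2}`, and still in `W`. The marginal conditions of `π` then turn this
almost-sure inclusion into `μ(Ū) ≤ ν(U^{ε/2})`, and symmetrically. -/

lemma msupport_eq_support {α : Type*} [TopologicalSpace α] [MeasurableSpace α]
    (μ : Measure α) : msupport μ = μ.support := by
  ext x
  exact (Measure.mem_support_iff_forall x).symm

lemma ae_dW_lt_of_costInf_lt {π : Measure (P2 × P2)} {r : ℝ}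
    (h : costInf π < ENNReal.ofReal r) : ∀ᵐ p ∂π, dW p.1 p.2 < r := by
  filter_upwards [Measure.support_mem_ae] with p hp
  rw [← msupport_eq_support] at hp
  have hle : ENNReal.ofReal (dW p.1 p.2) ≤ costInf π :=
    le_iSup₂ (f := fun (p : P2 × P2) (_ : p ∈ msupport π) => ENNReal.ofReal (dW p.1 p.2)) p hp
  exact ((ENNReal.ofReal_lt_ofReal_iff').1 (hle.trans_lt h)).1

lemma dW_comm (x y : P2) : dW x y = dW y x := by
  simp only [dW, dist_comm, add_comm]

lemma sub_div_two_le_distDiag (x : P2) : (x.2 - x.1) / 2 ≤ distDiag x := by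
  refine (Metric.le_infDist (s := Diag) ⟨(0, 0), rfl⟩).2 fun y (hy : y.1 = y.2) => ?_
  rw [Prod.dist_eq, Real.dist_eq, Real.dist_eq, ← hy]
  linarith [le_max_left |x.1 - y.1| |x.2 - y.1|, le_max_right |x.1 - y.1| |x.2 - y.1|,
    neg_abs_le (x.1 - y.1), le_abs_self (x.2 - y.1)]

lemma dist_lt_of_dW_lt {x y : P2} {r : ℝ} (h : dW x y < r) (hx : r ≤ distDiag x) :
    dist x y < r := by
  have hy : 0 ≤ distDiag y := Metric.infDist_nonneg
  rcases min_lt_iff.1 h with h | h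
  · exact h
  · linarith

lemma closure_Weps_subset (ε : ℝ) : closure (Weps ε) ⊆ {p : P2 | ε ≤ p.2 - p.1} :=
  closure_minimal (fun p (hp : p ∈ Weps ε) => (le_of_lt hp : ε ≤ p.2 - p.1))
    (isClosed_le continuous_const (continuous_snd.sub continuous_fst))

lemma mem_Wbd_of_dist_lt {a b : P2} {r : ℝ} (hab : dist a b < r) (ha : 2 * r ≤ a.2 - a.1) :
    b ∈ Wbd := by
  rw [Prod.dist_eq, Real.dist_eq, Real.dist_eq, max_lt_iff, abs_lt, abs_lt] at hab
  show b.1 < b.2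
  linarith [hab.1.1, hab.2.2]

lemma mem_thickening_inter_Wbd_of_dW_lt {ε : ℝ} {U : Set P2} (hUW : U ⊆ Weps ε) {a b : P2}
    (ha : a ∈ closure U) (hab : dW a b < ε / 2) :
    b ∈ Metric.thickening (ε / 2) U ∩ Wbd := by
  have hpers : ε ≤ a.2 - a.1 := closure_Weps_subset ε (closure_mono hUW ha)
  have hdist : dist a b < ε / 2 :=
    dist_lt_of_dW_lt hab (by linarith [sub_div_two_le_distDiag a])
  refine ⟨?_, mem_Wbd_of_dist_lt hdist (by linarith)⟩
  rw [← Metric.thickening_closure]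
  exact Metric.mem_thickening_iff.2 ⟨a, ha, by rwa [dist_comm]⟩

namespace IsCoupling

variable {π : Measure (P2 × P2)} {μ ν : Measure P2} {A B : Set P2}

lemma measure_le_of_ae_fst (hπ : IsCoupling π μ ν) (hA : A ⊆ Wbd) (hAm : MeasurableSet A)
    (hB : B ⊆ Wbd) (hBm : MeasurableSet B) (h : ∀ᵐ p ∂π, p.1 ∈ A → p.2 ∈ B) : μ A ≤ ν B := by
  rw [← hπ.2.1 A hA hAm, ← hπ.2.2 B hB hBm]
  refine measure_mono_ae ?_
  filter_upwards [h] with p hp hpA using ⟨subset_closure (hA hpA.1), hp hpA.1⟩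

lemma measure_le_of_ae_snd (hπ : IsCoupling π μ ν) (hA : A ⊆ Wbd) (hAm : MeasurableSet A)
    (hB : B ⊆ Wbd) (hBm : MeasurableSet B) (h : ∀ᵐ p ∂π, p.2 ∈ A → p.1 ∈ B) : ν A ≤ μ B := by
  rw [← hπ.2.2 A hA hAm, ← hπ.2.1 B hB hBm]
  refine measure_mono_ae ?_
  filter_upwards [h] with p hp hpA using ⟨hp hpA.2, subset_closure (hA hpA.2)⟩

end IsCoupling

theorem measure_interleaving_general
    (ε : ℝ)
    (μ ν : Measure P2)
    (U : Set P2) (hUW : U ⊆ Weps ε)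
    (hOT : OT μ ν < ENNReal.ofReal (ε / 2)) :
    μ (closure U) ≤ ν (Metric.thickening (ε / 2) U ∩ Wbd) ∧
      ν (closure U) ≤ μ (Metric.thickening (ε / 2) U ∩ Wbd) := by
  obtain ⟨π, hπ, hcost⟩ : ∃ π, IsCoupling π μ ν ∧ costInf π < ENNReal.ofReal (ε / 2) := by
    simpa only [OT, iInf_lt_iff, exists_prop] using hOT
  have hmove : ∀ᵐ p ∂π, dW p.1 p.2 < ε / 2 := ae_dW_lt_of_costInf_lt hcost
  have hε : 0 < ε / 2 := ENNReal.ofReal_pos.1 (pos_of_gt hOT)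
  have hclosure : closure U ⊆ Wbd := fun p hp => by
    have : ε ≤ p.2 - p.1 := closure_Weps_subset ε (closure_mono hUW hp)
    show p.1 < p.2
    linarith
  have hclosurem : MeasurableSet (closure U) := isClosed_closure.measurableSet
  have hthick : Metric.thickening (ε / 2) U ∩ Wbd ⊆ Wbd := inter_subset_right
  have hthickm : MeasurableSet (Metric.thickening (ε / 2) U ∩ Wbd) :=
    Metric.isOpen_thickening.measurableSet.inter (measurableSet_lt measurable_fst measurable_snd)
  constructor
  · refine hπ.measure_le_of_ae_fst hclosure hclosurem hthick hthickm ?_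
    filter_upwards [hmove] with p hp ha using mem_thickening_inter_Wbd_of_dW_lt hUW ha hp
  · refine hπ.measure_le_of_ae_snd hclosure hclosurem hthick hthickm ?_
    filter_upwards [hmove] with p hp hb
    exact mem_thickening_inter_Wbd_of_dW_lt hUW hb (dW_comm p.1 p.2 ▸ hp)

/-- The interleaving-type lemma: if `OT_∞(μ,ν) < ε/2` and `U ⊆ W_ε` is
measurable, then `μ(Ū) ≤ ν(U^{ε/2})` and `ν(Ū) ≤ μ(U^{ε/2})`, where `U^{ε/2}` is the
`ε/2`-thickening of `U` inside `W`. -/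
theorem measure_interleaving
    (ε : ℝ) (hε : 0 < ε)
    (μ ν : Measure P2) (hμ : μ ∈ MInf) (hν : ν ∈ MInf)
    (U : Set P2) (hUW : U ⊆ Weps ε) (hUm : MeasurableSet U)
    (hOT : OT μ ν < ENNReal.ofReal (ε / 2)) :
    μ (closure U) ≤ ν (Metric.thickening (ε / 2) U ∩ Wbd) ∧
      ν (closure U) ≤ μ (Metric.thickening (ε / 2) U ∩ Wbd) :=
  measure_interleaving_general ε μ ν U hUW hOT
end
end
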